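/- arXiv:2009.08549 — 9 statements merged into one kernel-verified Lean document; each statement's English description precedes it below -/
import Mathlib

section
/- Let (V, E, r) be a rooted tree with V finite, and let n be the number of leaves of the tree. Then the collection { {l} : l a leaf } of singletons of the leaves is a sweep-cover of cardinality n, and every sweep-cover S of (V, E, r) satisfies |S| ≤ n; hence n is the maximum possible size of a sweep-cover. -/
/-- A rooted tree: no edge enters the root, every non-root vertex has a unique parent,
and every vertex is reachable from the root. -/
structure IsRootedTree {V : Type*} (E : V → V → Prop) (r : V) : Prop where
  not_edge_root : ∀ u, ¬ E u r
  unique_parent : ∀ v, v ≠ r → ∃! u, E u v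
  reachable : ∀ v, Relation.ReflTransGen E r v

/-- A sweep-cover of a rooted tree `(V, E, r)`. -/
structure IsSweepCover {V : Type*} (E : V → V → Prop) (r : V) (S : Set (Set V)) : Prop where
  finite : S.Finite
  mem_finite : ∀ T ∈ S, T.Finite
  mem_nonempty : ∀ T ∈ S, T.Nonempty
  pairwiseDisjoint : ∀ T ∈ S, ∀ T' ∈ S, T ≠ T' → Disjoint T T'
  siblings : ∀ T ∈ S, T = {r} ∨ ∃ p, ∀ v ∈ T, E p v
  covers : ∀ v : V, (∃ T ∈ S, v ∈ T) ∨ (∃ w ∈ ⋃₀ S, Relation.TransGen E v w) ∨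
      (∃ w ∈ ⋃₀ S, Relation.TransGen E w v)
  antichain : ∀ u ∈ ⋃₀ S, ∀ v ∈ ⋃₀ S, u ≠ v → ¬ Relation.TransGen E u v

/-- Acyclicity of a rooted tree. -/
lemma rootedTree_acyclic {V : Type*} {E : V → V → Prop} {r : V} (hT : IsRootedTree E r) :
    ∀ v, ¬ Relation.TransGen E v v := by
  intro v
  have hr := hT.reachable v
  induction hr with
  | refl =>
    intro h
    rcases Relation.TransGen.tail'_iff.mp h with ⟨b, _, hbr⟩
    exact hT.not_edge_root b hbr
  | @tail b v h1 hbv IH =>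
    intro h
    rcases Relation.TransGen.tail'_iff.mp h with ⟨w, hvw, hwv⟩
    have hvr : v ≠ r := fun hv => hT.not_edge_root b (hv ▸ hbv)
    obtain ⟨p, _, hu⟩ := hT.unique_parent v hvr
    have hwb : w = b := (hu w hwv).trans (hu b hbv).symm
    exact IH (Relation.TransGen.head' hbv (hwb ▸ hvw))

/-- Ancestors of a common vertex are comparable. -/
lemma rootedTree_comparable {V : Type*} {E : V → V → Prop} {r : V} (hT : IsRootedTree E r) :
    ∀ {x u v : V}, Relation.ReflTransGen E u x → Relation.ReflTransGen E v x →
      Relation.ReflTransGen E u v ∨ Relation.ReflTransGen E v u := by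
  intro x u v h1
  induction h1 generalizing v with
  | refl => exact fun h2 => Or.inr h2
  | @tail b x h1' hbx IH =>
    intro h2
    rcases Relation.ReflTransGen.cases_tail h2 with rfl | ⟨c, hvc, hcx⟩
    · exact Or.inl (h1'.tail hbx)
    · have hxr : x ≠ r := fun hx => hT.not_edge_root b (hx ▸ hbx)
      obtain ⟨p, _, hu⟩ := hT.unique_parent x hxr
      have hcb : c = b := (hu c hcx).trans (hu b hbx).symm
      exact IH (hcb ▸ hvc)

/-- Every vertex of a finite rooted tree has a leaf below it. -/
lemma rootedTree_exists_leaf {V : Type*} [Fintype V] {E : V → V → Prop} {r : V}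
    (hT : IsRootedTree E r) :
    ∀ v, ∃ l, (∀ w, ¬ E l w) ∧ Relation.ReflTransGen E v l := by
  have wf : WellFounded (fun a b : V => Relation.TransGen E b a) := by
    have h1 : IsIrrefl V (fun a b : V => Relation.TransGen E b a) :=
      ⟨fun a h => rootedTree_acyclic hT a h⟩
    have h2 : IsTrans V (fun a b : V => Relation.TransGen E b a) :=
      ⟨fun a b c hab hbc => hbc.trans hab⟩
    exact Finite.wellFounded_of_trans_of_irrefl _
  intro v
  refine wf.induction (C := fun v => ∃ l, (∀ w, ¬ E l w) ∧ Relation.ReflTransGen E v l) v ?_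
  intro x IH
  by_cases hx : ∀ w, ¬ E x w
  · exact ⟨x, hx, Relation.ReflTransGen.refl⟩
  · push_neg at hx
    obtain ⟨w, hw⟩ := hx
    obtain ⟨l, hl, hwl⟩ := IH w (Relation.TransGen.single hw)
    exact ⟨l, hl, Relation.ReflTransGen.head hw hwl⟩

/-- In a finite rooted tree with `n` leaves, the singletons of the leaves form
a sweep-cover of cardinality `n`, and every sweep-cover has cardinality at most `n`. -/
theorem sweepCover_leaves_max
    {V : Type*} [Fintype V] (E : V → V → Prop) (r : V) (hT : IsRootedTree E r)
    (n : ℕ) (hn : n = {v : V | ∀ w, ¬ E v w}.ncard) :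
    IsSweepCover E r {T : Set V | ∃ l : V, (∀ w, ¬ E l w) ∧ T = {l}} ∧
    {T : Set V | ∃ l : V, (∀ w, ¬ E l w) ∧ T = {l}}.ncard = n ∧
    ∀ S : Set (Set V), IsSweepCover E r S → S.ncard ≤ n := by
  classical
  set S₀ : Set (Set V) := {T : Set V | ∃ l : V, (∀ w, ¬ E l w) ∧ T = {l}} with hS₀
  have hS₀eq : S₀ = (fun l : V => ({l} : Set V)) '' {v : V | ∀ w, ¬ E v w} := by
    ext T
    simp only [hS₀, Set.mem_setOf_eq, Set.mem_image]
    constructor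
    · rintro ⟨l, hl, rfl⟩; exact ⟨l, hl, rfl⟩
    · rintro ⟨l, hl, rfl⟩; exact ⟨l, hl, rfl⟩
  have hmem_leaf : ∀ l : V, (∀ w, ¬ E l w) → ({l} : Set V) ∈ S₀ := fun l hl => ⟨l, hl, rfl⟩
  have hne : ∀ {a b : V}, Relation.ReflTransGen E a b → a ≠ b → Relation.TransGen E a b := by
    intro a b h hab
    rcases Relation.reflTransGen_iff_eq_or_transGen.mp h with rfl | h'
    · exact absurd rfl hab
    · exact h'
  refine ⟨?_, ?_, ?_⟩
  · constructor
    · rw [hS₀eq]; exact (Set.toFinite _).image _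
    · rintro T ⟨l, _, rfl⟩; exact Set.finite_singleton l
    · rintro T ⟨l, _, rfl⟩; exact Set.singleton_nonempty l
    · rintro T ⟨l, _, rfl⟩ T' ⟨l', _, rfl⟩ hne'
      have : l ≠ l' := fun h => hne' (by rw [h])
      simpa [Set.disjoint_singleton] using this
    · rintro T ⟨l, hl, rfl⟩
      by_cases hlr : l = r
      · exact Or.inl (by rw [hlr])
      · obtain ⟨p, hp, _⟩ := hT.unique_parent l hlr
        exact Or.inr ⟨p, fun v hv => by rw [Set.mem_singleton_iff.mp hv]; exact hp⟩
    · intro v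
      obtain ⟨l, hl, hvl⟩ := rootedTree_exists_leaf hT v
      by_cases hveq : v = l
      · exact Or.inl ⟨{l}, hmem_leaf l hl, by rw [hveq]; rfl⟩
      · refine Or.inr (Or.inl ⟨l, ⟨{l}, hmem_leaf l hl, rfl⟩, hne hvl hveq⟩)
    · rintro u ⟨T, ⟨l, hl, rfl⟩, hu⟩ v - huv h
      rw [Set.mem_singleton_iff.mp hu] at h
      rcases Relation.TransGen.head'_iff.mp h with ⟨b, hlb, _⟩
      exact hl b hlb
  · rw [hS₀eq, Set.ncard_image_of_injective _ Set.singleton_injective, hn]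
  · intro S hS
    have key : ∀ T : Set V, ∃ l : V, T ∈ S →
        (∀ w, ¬ E l w) ∧ ∃ v ∈ T, Relation.ReflTransGen E v l := by
      intro T
      by_cases hTS : T ∈ S
      · obtain ⟨v, hv⟩ := hS.mem_nonempty T hTS
        obtain ⟨l, hl, hvl⟩ := rootedTree_exists_leaf hT v
        exact ⟨l, fun _ => ⟨hl, v, hv, hvl⟩⟩
      · exact ⟨r, fun h => absurd h hTS⟩
    choose f hf using key
    have hmaps : ∀ T ∈ S, f T ∈ {v : V | ∀ w, ¬ E v w} := fun T hTS => (hf T hTS).1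
    have hinj : Set.InjOn f S := by
      intro T hTS T' hT'S hfeq
      obtain ⟨-, v, hvT, hvl⟩ := hf T hTS
      obtain ⟨-, v', hv'T, hv'l⟩ := hf T' hT'S
      rw [hfeq] at hvl
      by_contra hTT'
      have hvne : v ≠ v' := by
        intro h
        exact (hS.pairwiseDisjoint T hTS T' hT'S hTT').ne_of_mem hvT hv'T h
      have hvS : v ∈ ⋃₀ S := ⟨T, hTS, hvT⟩
      have hv'S : v' ∈ ⋃₀ S := ⟨T', hT'S, hv'T⟩
      rcases rootedTree_comparable hT hvl hv'l with hc | hc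
      · exact hS.antichain v hvS v' hv'S hvne (hne hc hvne)
      · exact hS.antichain v' hv'S v hvS hvne.symm (hne hc hvne.symm)
    calc S.ncard ≤ {v : V | ∀ w, ¬ E v w}.ncard :=
          Set.ncard_le_ncard_of_injOn f hmaps hinj (Set.toFinite _)
      _ = n := hn.symm
end

section
/- Let (V, E, r) be a rooted tree, S a sweep-cover, and S_i ∈ S a member with S_i ≠ {r}; let v_p be the common parent of the elements of S_i, and let V_i = S_i ∪ {ancestors of elements of S_i} ∪ {descendants of elements of S_i}. Then every strict ancestor u of v_p belongs to V_i, and every such u has exactly one vertex w ∈ V_i with E u w; that is, the induced subgraph on V_i contains a linear path from r to v_p. -/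
lemma parent_eq {V : Type*} {E : V → V → Prop} {r : V} (hT : IsRootedTree E r)
    {a b c : V} (e1 : E a c) (e2 : E b c) : a = b := by
  have hc : c ≠ r := fun h => hT.not_edge_root a (h ▸ e1)
  obtain ⟨p, hp, hup⟩ := hT.unique_parent c hc
  rw [hup a e1, hup b e2]

lemma no_cycle {V : Type*} {E : V → V → Prop} {r : V} (hT : IsRootedTree E r)
    (u : V) : ¬ Relation.TransGen E u u := by
  have h := hT.reachable u
  induction h with
  | refl =>
    intro hc
    obtain ⟨d, _, hd⟩ := (Relation.TransGen.tail'_iff).mp hc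
    exact hT.not_edge_root d hd
  | @tail b c hb e ih =>
    intro hc
    obtain ⟨d, hcd, hd⟩ := (Relation.TransGen.tail'_iff).mp hc
    have : d = b := parent_eq hT hd e
    subst this
    exact ih ((Relation.TransGen.head'_iff).mpr ⟨c, e, hcd⟩)

lemma comparable {V : Type*} {E : V → V → Prop} {r : V} (hT : IsRootedTree E r)
    {a b z : V} (ha : Relation.ReflTransGen E a z) (hb : Relation.ReflTransGen E b z) :
    Relation.ReflTransGen E a b ∨ Relation.ReflTransGen E b a := by
  induction ha using Relation.ReflTransGen.head_induction_on with
  | refl => exact Or.inr hb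
  | head e h ih =>
    rename_i a c
    rcases ih with h1 | h1
    · exact Or.inl (Relation.ReflTransGen.head e h1)
    · rcases h1.cases_tail with h2 | ⟨d, hbd, hdc⟩
      · subst h2
        exact Or.inl (Relation.ReflTransGen.single e)
      · have : d = a := parent_eq hT hdc e
        exact Or.inr (this ▸ hbd)
/-- For a member `Si ≠ {r}` of a sweep-cover with common parent `vp`, every
strict ancestor `u` of `vp` lies in the induced vertex set `Vi`, and has exactly one
child inside `Vi`: the induced subgraph contains a linear path from `r` to `vp`. -/
theorem inducedSubgraph_linear_path
    {V : Type*} (E : V → V → Prop) (r : V) (hT : IsRootedTree E r)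
    (S : Set (Set V)) (hS : IsSweepCover E r S)
    (Si : Set V) (hSi : Si ∈ S) (hSir : Si ≠ ({r} : Set V))
    (vp : V) (hvp : ∀ x ∈ Si, E vp x)
    (Vi : Set V)
    (hVi : Vi = Si ∪ {u | ∃ x ∈ Si, Relation.TransGen E u x}
                   ∪ {u | ∃ x ∈ Si, Relation.TransGen E x u}) :
    ∀ u : V, Relation.TransGen E u vp →
      u ∈ Vi ∧ ∃! w : V, w ∈ Vi ∧ E u w := by
  intro u hu
  obtain ⟨x, hx⟩ := hS.mem_nonempty Si hSi
  have huVi : u ∈ Vi := by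
    rw [hVi]
    exact Or.inl (Or.inr ⟨x, hx, hu.tail (hvp x hx)⟩)
  refine ⟨huVi, ?_⟩
  obtain ⟨w, huw, hwvp⟩ := (Relation.TransGen.head'_iff).mp hu
  have hwVi : w ∈ Vi := by
    rw [hVi]
    exact Or.inl (Or.inr ⟨x, hx, Relation.TransGen.tail' hwvp (hvp x hx)⟩)
  refine ⟨w, ⟨hwVi, huw⟩, ?_⟩
  rintro w' ⟨hw'Vi, huw'⟩
  rw [hVi] at hw'Vi
  have hcases : (∃ x' ∈ Si, Relation.ReflTransGen E w' x') ∨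
      (∃ x' ∈ Si, Relation.TransGen E x' w') := by
    rcases hw'Vi with (h | ⟨x', hx', h⟩) | ⟨x', hx', h⟩
    · exact Or.inl ⟨w', h, Relation.ReflTransGen.refl⟩
    · exact Or.inl ⟨x', hx', h.to_reflTransGen⟩
    · exact Or.inr ⟨x', hx', h⟩
  rcases hcases with ⟨x', hx', hwx'⟩ | ⟨x', hx', hx'w'⟩
  · have hw_x' : Relation.ReflTransGen E w x' :=
      hwvp.trans (Relation.ReflTransGen.single (hvp x' hx'))
    rcases comparable hT hw_x' hwx' with h | h
    · rcases h.cases_tail with h2 | ⟨d, hwd, hdw'⟩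
      · exact h2
      · rw [parent_eq hT hdw' huw'] at hwd
        exact absurd ((Relation.TransGen.head'_iff).mpr ⟨w, huw, hwd⟩)
          (no_cycle hT u)
    · rcases h.cases_tail with h2 | ⟨d, hwd, hdw⟩
      · exact h2.symm
      · rw [parent_eq hT hdw huw] at hwd
        exact absurd ((Relation.TransGen.head'_iff).mpr ⟨w', huw', hwd⟩)
          (no_cycle hT u)
  · obtain ⟨d, hx'd, hdw'⟩ := (Relation.TransGen.tail'_iff).mp hx'w'
    rw [parent_eq hT hdw' huw'] at hx'd
    have : Relation.TransGen E u u := Relation.TransGen.trans_left (hu.tail (hvp x' hx')) hx'd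
    exact absurd this (no_cycle hT u)
end

section
/- Let (V, E, r) be a rooted tree and S a sweep-cover, and for each member S_i ∈ S let V_i = S_i ∪ {ancestors of elements of S_i} ∪ {descendants of elements of S_i}. Then ⋃_{S_i ∈ S} V_i = V, and for every edge (u, w) with E u w there exists some S_i ∈ S with both u ∈ V_i and w ∈ V_i; that is, the union of the induced subgraphs defined by S equals the whole tree. -/
/-- The vertex set of the induced subgraph of a member `Si` of a sweep-cover:
`Si` together with all ancestors and all descendants of its elements. -/
def inducedVertexSet {V : Type*} (E : V → V → Prop) (Si : Set V) : Set V :=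
  Si ∪ {u | ∃ x ∈ Si, Relation.TransGen E u x} ∪ {u | ∃ x ∈ Si, Relation.TransGen E x u}

lemma mem_induced_self {V : Type*} (E : V → V → Prop) {Si : Set V} {v : V}
    (h : v ∈ Si) : v ∈ inducedVertexSet E Si := Or.inl (Or.inl h)

lemma mem_induced_anc {V : Type*} (E : V → V → Prop) {Si : Set V} {v x : V}
    (hx : x ∈ Si) (h : Relation.TransGen E v x) : v ∈ inducedVertexSet E Si :=
  Or.inl (Or.inr ⟨x, hx, h⟩)

lemma mem_induced_desc {V : Type*} (E : V → V → Prop) {Si : Set V} {v x : V}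
    (hx : x ∈ Si) (h : Relation.TransGen E x v) : v ∈ inducedVertexSet E Si :=
  Or.inr ⟨x, hx, h⟩

/-- The union of the induced subgraphs defined by a sweep-cover is the whole
tree: the vertex sets cover `V`, and every edge lies inside some induced subgraph. -/
theorem inducedSubgraphs_union_eq_tree
    {V : Type*} (E : V → V → Prop) (r : V) (hT : IsRootedTree E r)
    (S : Set (Set V)) (hS : IsSweepCover E r S) :
    (⋃ Si ∈ S, inducedVertexSet E Si) = Set.univ ∧
    ∀ u w : V, E u w →
      ∃ Si ∈ S, u ∈ inducedVertexSet E Si ∧ w ∈ inducedVertexSet E Si := by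
  constructor
  · ext v
    simp only [Set.mem_iUnion, Set.mem_univ, iff_true]
    rcases hS.covers v with ⟨T, hT', hv⟩ | ⟨x, ⟨T, hT', hx⟩, h⟩ | ⟨x, ⟨T, hT', hx⟩, h⟩
    · exact ⟨T, hT', mem_induced_self E hv⟩
    · exact ⟨T, hT', mem_induced_anc E hx h⟩
    · exact ⟨T, hT', mem_induced_desc E hx h⟩
  · intro u w huw
    have hwr : w ≠ r := fun h => hT.not_edge_root u (h ▸ huw)
    rcases hS.covers w with ⟨T, hT', hv⟩ | ⟨x, ⟨T, hT', hx⟩, h⟩ | ⟨x, ⟨T, hT', hx⟩, h⟩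
    · exact ⟨T, hT', mem_induced_anc E hv (Relation.TransGen.single huw),
        mem_induced_self E hv⟩
    · exact ⟨T, hT', mem_induced_anc E hx (Relation.TransGen.head huw h),
        mem_induced_anc E hx h⟩
    · -- x is an ancestor of w; u is the parent of w, so x = u or x is an ancestor of u
      obtain ⟨y, hxy, hyw⟩ := Relation.TransGen.tail'_iff.mp h
      have hyu : y = u := by
        obtain ⟨p, hp, hup⟩ := hT.unique_parent w hwr
        rw [hup y hyw, hup u huw]
      rcases hxy.cases_head with heq | ⟨z, hxz, hzy⟩
      · exact ⟨T, hT', mem_induced_self E (hyu ▸ heq ▸ hx),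
          mem_induced_desc E hx h⟩
      · exact ⟨T, hT', mem_induced_desc E hx
          (hyu ▸ Relation.TransGen.head' hxz hzy), mem_induced_desc E hx h⟩
end

section
/- Let (V, E, r) be a rooted tree, S a sweep-cover, S_i ∈ S a member, V_i = S_i ∪ {ancestors of elements of S_i} ∪ {descendants of elements of S_i}, and E_i the restriction of E to V_i. Then (V_i, E_i, r) is itself a rooted tree with root r, and the one-member collection {S_i} is a sweep-cover of (V_i, E_i, r). -/
open Relation

section

variable {V : Type*} {E : V → V → Prop} {r : V}

def PredClosed (E : V → V → Prop) (U : Set V) : Prop :=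
  ∀ ⦃u v⦄, E u v → v ∈ U → u ∈ U

namespace PredClosed

variable {U : Set V}

theorem mem_of_reflTransGen (hU : PredClosed E U) {a b : V} (h : ReflTransGen E a b)
    (hb : b ∈ U) : a ∈ U := by
  induction h using ReflTransGen.head_induction_on with
  | refl => exact hb
  | head hac _ ih => exact hU hac ih

theorem reflTransGen_subrel (hU : PredClosed E U) (a : U) {b : V} (hb : b ∈ U)
    (h : ReflTransGen E a b) : ReflTransGen (Subrel E (· ∈ U)) a ⟨b, hb⟩ := by
  induction h with
  | refl => rfl
  | tail _ hcd ih => exact (ih (hU hcd hb)).tail hcd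

theorem transGen_subrel (hU : PredClosed E U) (a b : U) (h : TransGen E a b) :
    TransGen (Subrel E (· ∈ U)) a b := by
  obtain ⟨c, hac, hcb⟩ := TransGen.tail'_iff.mp h
  exact TransGen.tail' (hU.reflTransGen_subrel a (hU hcb b.2) hac) hcb

end PredClosed

theorem subset_inducedVertexSet (E : V → V → Prop) (Si : Set V) : Si ⊆ inducedVertexSet E Si :=
  Set.subset_union_left.trans Set.subset_union_left

namespace IsRootedTree

theorem eq_of_edge_of_edge (hT : IsRootedTree E r) {u u' v : V} (hu : E u v) (hu' : E u' v) :
    u = u' :=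
  (hT.unique_parent v fun hvr => hT.not_edge_root u (hvr ▸ hu)).unique hu hu'

theorem subrel {U : Set V} (hT : IsRootedTree E r) (hU : PredClosed E U) (hr : r ∈ U) :
    IsRootedTree (Subrel E (· ∈ U)) ⟨r, hr⟩ where
  not_edge_root u := hT.not_edge_root u
  unique_parent := by
    rintro ⟨v, hv⟩ hvr
    obtain ⟨u, hu, huniq⟩ := hT.unique_parent v fun h => hvr (Subtype.ext h)
    exact ⟨⟨u, hU hu hv⟩, hu, fun w hw => Subtype.ext (huniq w hw)⟩
  reachable v := hU.reflTransGen_subrel ⟨r, hr⟩ v.2 (hT.reachable v)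

theorem predClosed_inducedVertexSet (hT : IsRootedTree E r) (Si : Set V) :
    PredClosed E (inducedVertexSet E Si) := by
  rintro u v huv ((hv | ⟨x, hx, hvx⟩) | ⟨x, hx, hxv⟩)
  · exact Or.inl (Or.inr ⟨v, hv, .single huv⟩)
  · exact Or.inl (Or.inr ⟨x, hx, .head huv hvx⟩)
  · obtain ⟨c, hxc, hcv⟩ := TransGen.tail'_iff.mp hxv
    rcases reflTransGen_iff_eq_or_transGen.mp (hT.eq_of_edge_of_edge hcv huv ▸ hxc) with rfl | hxu
    · exact subset_inducedVertexSet E Si hx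
    · exact Or.inr ⟨x, hx, hxu⟩

end IsRootedTree

theorem IsSweepCover.singleton_inducedVertexSet {S : Set (Set V)} {Si : Set V}
    (hT : IsRootedTree E r) (hS : IsSweepCover E r S) (hSi : Si ∈ S)
    (hr : r ∈ inducedVertexSet E Si) :
    IsSweepCover (Subrel E (· ∈ inducedVertexSet E Si)) ⟨r, hr⟩ {Subtype.val ⁻¹' Si} := by
  have hVi := hT.predClosed_inducedVertexSet Si
  have hSiVi := subset_inducedVertexSet E Si
  obtain ⟨x, hx⟩ := hS.mem_nonempty Si hSi
  refine ⟨Set.finite_singleton _, ?_, ?_, ?_, ?_, ?_, ?_⟩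
  · rintro T rfl
    exact (hS.mem_finite Si hSi).preimage Subtype.val_injective.injOn
  · rintro T rfl
    exact ⟨⟨x, hSiVi hx⟩, hx⟩
  · rintro T rfl T' rfl h
    exact absurd rfl h
  · rintro T rfl
    rcases hS.siblings Si hSi with rfl | ⟨p, hp⟩
    · exact Or.inl (Set.ext fun _ => ⟨fun h => Subtype.ext h, congrArg Subtype.val⟩)
    · exact Or.inr ⟨⟨p, hVi (hp x hx) (hSiVi hx)⟩, fun v hv => hp v hv⟩
  · intro v
    rcases v.2 with (hv | ⟨y, hy, hvy⟩) | ⟨y, hy, hyv⟩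
    · exact Or.inl ⟨_, rfl, hv⟩
    · exact Or.inr (Or.inl ⟨⟨y, hSiVi hy⟩, ⟨_, rfl, hy⟩, hVi.transGen_subrel v _ hvy⟩)
    · exact Or.inr (Or.inr ⟨⟨y, hSiVi hy⟩, ⟨_, rfl, hy⟩, hVi.transGen_subrel _ v hyv⟩)
  · rintro u ⟨_, rfl, hu⟩ v ⟨_, rfl, hv⟩ huv h
    exact hS.antichain u ⟨Si, hSi, hu⟩ v ⟨Si, hSi, hv⟩ (fun he => huv (Subtype.ext he))
      (h.lift Subtype.val fun _ _ hab => hab)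

end

/-- Each induced subgraph `(Vi, Ei, r)` of a member `Si` of a sweep-cover is
itself a rooted tree with root `r`, and the one-member collection `{Si}` is a
sweep-cover of it. -/
theorem inducedSubgraph_rootedTree_and_singleton_sweepCover
    {V : Type*} (E : V → V → Prop) (r : V) (hT : IsRootedTree E r)
    (S : Set (Set V)) (hS : IsSweepCover E r S)
    (Si : Set V) (hSi : Si ∈ S) :
    ∃ hr : r ∈ inducedVertexSet E Si,
      IsRootedTree (fun a b : ↥(inducedVertexSet E Si) => E ↑a ↑b) ⟨r, hr⟩ ∧
      IsSweepCover (fun a b : ↥(inducedVertexSet E Si) => E ↑a ↑b) ⟨r, hr⟩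
        {Subtype.val ⁻¹' Si} := by
  have hVi := hT.predClosed_inducedVertexSet Si
  obtain ⟨x, hx⟩ := hS.mem_nonempty Si hSi
  have hr : r ∈ inducedVertexSet E Si :=
    hVi.mem_of_reflTransGen (hT.reachable x) (subset_inducedVertexSet E Si hx)
  exact ⟨hr, hT.subrel hVi hr, hS.singleton_inducedVertexSet hT hSi hr⟩
end

section
/- Let (V, E, r) be a rooted tree, S a sweep-cover, and let f and g be two choice functions assigning to each member T ∈ S an element f(T) ∈ T and g(T) ∈ T respectively. Let W_f = ⋃_{T ∈ S} ({f(T)} ∪ {ancestors of f(T)}) and W_g = ⋃_{T ∈ S} ({g(T)} ∪ {ancestors of g(T)}) be the vertex sets of the two embedding trees. Then there exists a bijection φ : W_f → W_g such that φ(r) = r and for all u, v ∈ W_f, E u v holds if and only if E (φ u) (φ v) holds; that is, all embedding trees created from the same sweep-cover are isomorphic as rooted trees. -/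
/-- No vertex of a rooted tree lies on a cycle. -/
lemma IsRootedTree.noCycle {V : Type*} {E : V → V → Prop} {r : V}
    (hT : IsRootedTree E r) (v : V) : ¬ Relation.TransGen E v v := by
  have h := hT.reachable v
  induction h with
  | refl =>
    intro hc
    obtain ⟨b, _, hbr⟩ := Relation.TransGen.tail'_iff.mp hc
    exact hT.not_edge_root b hbr
  | @tail w v hrw hwv ih =>
    intro hc
    obtain ⟨b, hvb, hbv⟩ := Relation.TransGen.tail'_iff.mp hc
    have hvr : v ≠ r := fun he => hT.not_edge_root w (he ▸ hwv)
    obtain ⟨q, hq, huniq⟩ := hT.unique_parent v hvr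
    have hbw : b = w := (huniq b hbv).trans (huniq w hwv).symm
    exact ih (Relation.TransGen.head' hwv (hbw ▸ hvb))

/-- No element of the union of a sweep-cover is an ancestor of another one. -/
lemma IsSweepCover.noAnc {V : Type*} {E : V → V → Prop} {r : V} {S : Set (Set V)}
    (hT : IsRootedTree E r) (hS : IsSweepCover E r S) :
    ∀ x ∈ ⋃₀ S, ∀ y ∈ ⋃₀ S, ¬ Relation.TransGen E x y := by
  intro x hx y hy h
  by_cases hxy : x = y
  · exact hT.noCycle x (hxy ▸ h)
  · exact hS.antichain x hx y hy hxy h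

/-- Two elements of the same member of a sweep-cover have the same strict ancestors. -/
lemma ancEq {V : Type*} {E : V → V → Prop} {r : V} {S : Set (Set V)}
    (hT : IsRootedTree E r) (hS : IsSweepCover E r S)
    {T : Set V} (hTm : T ∈ S) {a b : V} (ha : a ∈ T) (hb : b ∈ T) (u : V) :
    Relation.TransGen E u a ↔ Relation.TransGen E u b := by
  rcases hS.siblings T hTm with h1 | ⟨p, hp⟩
  · rw [h1] at ha hb
    rw [ha, hb]
  · have key : ∀ x, E p x → (Relation.TransGen E u x ↔ Relation.ReflTransGen E u p) := by
      intro x hx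
      constructor
      · intro h
        obtain ⟨c, huc, hcx⟩ := Relation.TransGen.tail'_iff.mp h
        have hxr : x ≠ r := fun he => hT.not_edge_root p (he ▸ hx)
        obtain ⟨q, _, huniq⟩ := hT.unique_parent x hxr
        have : c = p := (huniq c hcx).trans (huniq p hx).symm
        rwa [this] at huc
      · intro h
        exact Relation.TransGen.tail' h hx
    rw [key a (hp a ha), key b (hp b hb)]

section Main

variable {V : Type*} {E : V → V → Prop} {r : V} {S : Set (Set V)}

/-- Membership in the embedding tree vertex set. -/
lemma memW (f : Set V → V) (v : V) :
    v ∈ (⋃ T ∈ S, ({f T} ∪ {u | Relation.TransGen E u (f T)})) ↔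
      ∃ T ∈ S, v = f T ∨ Relation.TransGen E v (f T) := by
  simp [Set.mem_iUnion, Set.mem_union, Set.mem_singleton_iff, Set.mem_setOf_eq]

lemma mapMem (hT : IsRootedTree E r) (hS : IsSweepCover E r S)
    (f g : Set V → V) (hf : ∀ T ∈ S, f T ∈ T) (hg : ∀ T ∈ S, g T ∈ T)
    (φ₀ : V → V) (hφf : ∀ T ∈ S, φ₀ (f T) = g T)
    (hφid : ∀ v, (¬ ∃ T ∈ S, v = f T) → φ₀ v = v)
    {v : V} (hv : v ∈ (⋃ T ∈ S, ({f T} ∪ {u | Relation.TransGen E u (f T)}))) :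
    φ₀ v ∈ (⋃ T ∈ S, ({g T} ∪ {u | Relation.TransGen E u (g T)})) := by
  rw [memW] at hv ⊢
  by_cases hform : ∃ T ∈ S, v = f T
  · obtain ⟨T, hTm, rfl⟩ := hform
    exact ⟨T, hTm, Or.inl (hφf T hTm)⟩
  · rw [hφid v hform]
    obtain ⟨T, hTm, hc⟩ := hv
    rcases hc with rfl | hanc
    · exact absurd ⟨T, hTm, rfl⟩ hform
    · exact ⟨T, hTm, Or.inr ((ancEq hT hS hTm (hf T hTm) (hg T hTm) v).mp hanc)⟩

lemma invOn (hT : IsRootedTree E r) (hS : IsSweepCover E r S)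
    (f g : Set V → V) (hf : ∀ T ∈ S, f T ∈ T) (hg : ∀ T ∈ S, g T ∈ T)
    (φ₀ ψ₀ : V → V) (hφf : ∀ T ∈ S, φ₀ (f T) = g T)
    (hφid : ∀ v, (¬ ∃ T ∈ S, v = f T) → φ₀ v = v)
    (hψg : ∀ T ∈ S, ψ₀ (g T) = f T)
    (hψid : ∀ v, (¬ ∃ T ∈ S, v = g T) → ψ₀ v = v)
    {v : V} (hv : v ∈ (⋃ T ∈ S, ({f T} ∪ {u | Relation.TransGen E u (f T)}))) :
    ψ₀ (φ₀ v) = v := by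
  rw [memW] at hv
  by_cases hform : ∃ T ∈ S, v = f T
  · obtain ⟨T, hTm, rfl⟩ := hform
    rw [hφf T hTm, hψg T hTm]
  · rw [hφid v hform]
    apply hψid
    rintro ⟨T, hTm, rfl⟩
    obtain ⟨T', hTm', hc⟩ := hv
    rcases hc with he | hanc
    · exact hform ⟨T', hTm', he⟩
    · exact hS.noAnc hT _ ⟨T, hTm, hg T hTm⟩ _ ⟨T', hTm', hf T' hTm'⟩ hanc

lemma edgeStep (hT : IsRootedTree E r) (hS : IsSweepCover E r S)
    (f g : Set V → V) (hf : ∀ T ∈ S, f T ∈ T) (hg : ∀ T ∈ S, g T ∈ T)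
    (φ₀ : V → V) (hφf : ∀ T ∈ S, φ₀ (f T) = g T)
    (hφid : ∀ v, (¬ ∃ T ∈ S, v = f T) → φ₀ v = v)
    {u v : V} (hv : v ∈ (⋃ T ∈ S, ({f T} ∪ {u | Relation.TransGen E u (f T)})))
    (hE : E u v) : E (φ₀ u) (φ₀ v) := by
  rw [memW] at hv
  by_cases hform : ∃ T ∈ S, v = f T
  · obtain ⟨T, hTm, rfl⟩ := hform
    rw [hφf T hTm]
    rcases hS.siblings T hTm with h1 | ⟨p, hp⟩
    · have hfr : f T = r := by
        have h2 : f T ∈ ({r} : Set V) := by rw [← h1]; exact hf T hTm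
        exact h2
      exact absurd (hfr ▸ hE) (hT.not_edge_root u)
    · have hpf : E p (f T) := hp _ (hf T hTm)
      have hnr : f T ≠ r := fun he => hT.not_edge_root p (he ▸ hpf)
      obtain ⟨q, _, huniq⟩ := hT.unique_parent (f T) hnr
      have hup : u = p := (huniq u hE).trans (huniq p hpf).symm
      have hunotf : ¬ ∃ T' ∈ S, u = f T' := by
        rintro ⟨T', hTm', rfl⟩
        exact hS.noAnc hT _ ⟨T', hTm', hf T' hTm'⟩ _ ⟨T, hTm, hf T hTm⟩
          (Relation.TransGen.single hE)
      rw [hφid u hunotf, hup]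
      exact hp _ (hg T hTm)
  · rw [hφid v hform]
    have hunotf : ¬ ∃ T' ∈ S, u = f T' := by
      rintro ⟨T', hTm', rfl⟩
      obtain ⟨T, hTm, hc⟩ := hv
      rcases hc with he | hanc
      · exact hform ⟨T, hTm, he⟩
      · exact hS.noAnc hT _ ⟨T', hTm', hf T' hTm'⟩ _ ⟨T, hTm, hf T hTm⟩
          (Relation.TransGen.head hE hanc)
    rw [hφid u hunotf]
    exact hE

end Main

/-- All embedding trees created from the same sweep-cover are isomorphic as
rooted trees: for any two choice functions `f, g` picking one element of each member of
the sweep-cover, there is a bijection between the vertex sets of the two embedding trees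
fixing the root and preserving the edge relation in both directions. -/
theorem embedding_trees_isomorphic
    {V : Type*} (E : V → V → Prop) (r : V) (hT : IsRootedTree E r)
    (S : Set (Set V)) (hS : IsSweepCover E r S)
    (f g : Set V → V) (hf : ∀ T ∈ S, f T ∈ T) (hg : ∀ T ∈ S, g T ∈ T)
    (Wf Wg : Set V)
    (hWf : Wf = ⋃ T ∈ S, ({f T} ∪ {u | Relation.TransGen E u (f T)}))
    (hWg : Wg = ⋃ T ∈ S, ({g T} ∪ {u | Relation.TransGen E u (g T)})) :
    ∃ (hrf : r ∈ Wf) (hrg : r ∈ Wg) (φ : ↥Wf ≃ ↥Wg),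
      φ ⟨r, hrf⟩ = ⟨r, hrg⟩ ∧
      ∀ u v : ↥Wf, E ↑u ↑v ↔ E ↑(φ u) ↑(φ v) := by
  classical
  subst hWf hWg
  -- injectivity of `f` and `g` on `S`
  have finj : ∀ T ∈ S, ∀ T' ∈ S, f T = f T' → T = T' := by
    intro T hTm T' hTm' h
    by_contra hne
    exact Set.disjoint_left.mp (hS.pairwiseDisjoint T hTm T' hTm' hne)
      (hf T hTm) (h ▸ hf T' hTm')
  have ginj : ∀ T ∈ S, ∀ T' ∈ S, g T = g T' → T = T' := by
    intro T hTm T' hTm' h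
    by_contra hne
    exact Set.disjoint_left.mp (hS.pairwiseDisjoint T hTm T' hTm' hne)
      (hg T hTm) (h ▸ hg T' hTm')
  -- the underlying maps
  set φ₀ : V → V := fun v => if h : ∃ T ∈ S, v = f T then g h.choose else v with hφ₀
  set ψ₀ : V → V := fun v => if h : ∃ T ∈ S, v = g T then f h.choose else v with hψ₀
  have hφf : ∀ T ∈ S, φ₀ (f T) = g T := by
    intro T hTm
    have h : ∃ T' ∈ S, f T = f T' := ⟨T, hTm, rfl⟩
    rw [hφ₀]
    simp only [dif_pos h]
    obtain ⟨hmem, heq⟩ := h.choose_spec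
    rw [← finj T hTm h.choose hmem heq]
  have hφid : ∀ v, (¬ ∃ T ∈ S, v = f T) → φ₀ v = v := by
    intro v h; rw [hφ₀]; simp only [dif_neg h]
  have hψg : ∀ T ∈ S, ψ₀ (g T) = f T := by
    intro T hTm
    have h : ∃ T' ∈ S, g T = g T' := ⟨T, hTm, rfl⟩
    rw [hψ₀]
    simp only [dif_pos h]
    obtain ⟨hmem, heq⟩ := h.choose_spec
    rw [← ginj T hTm h.choose hmem heq]
  have hψid : ∀ v, (¬ ∃ T ∈ S, v = g T) → ψ₀ v = v := by
    intro v h; rw [hψ₀]; simp only [dif_neg h]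
  -- S is nonempty, hence the root belongs to both vertex sets
  have hSne : S.Nonempty := by
    rcases hS.covers r with ⟨T, hTm, _⟩ | ⟨w, ⟨T, hTm, _⟩, _⟩ | ⟨w, ⟨T, hTm, _⟩, _⟩ <;>
      exact ⟨T, hTm⟩
  obtain ⟨T0, hT0⟩ := hSne
  have hrootmem : ∀ (h : Set V → V), (∀ T ∈ S, h T ∈ T) →
      r ∈ (⋃ T ∈ S, ({h T} ∪ {u | Relation.TransGen E u (h T)})) := by
    intro h hh
    rw [memW]
    refine ⟨T0, hT0, ?_⟩
    rcases Relation.reflTransGen_iff_eq_or_transGen.mp (hT.reachable (h T0)) with he | ht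
    · exact Or.inl he.symm
    · exact Or.inr ht
  have hrf := hrootmem f hf
  have hrg := hrootmem g hg
  refine ⟨hrf, hrg, ?_⟩
  -- root is fixed
  have hφr : φ₀ r = r := by
    by_cases h : ∃ T ∈ S, r = f T
    · obtain ⟨T, hTm, he⟩ := h
      rcases hS.siblings T hTm with h1 | ⟨p, hp⟩
      · have hgr : g T = r := by
          have h2 : g T ∈ ({r} : Set V) := by rw [← h1]; exact hg T hTm
          exact h2
        rw [he, hφf T hTm, hgr]
        exact he
      · have h2 := hp _ (hf T hTm)
        rw [← he] at h2
        exact absurd h2 (hT.not_edge_root p)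
    · exact hφid r h
  -- the equivalence
  refine ⟨⟨fun v => ⟨φ₀ v, mapMem hT hS f g hf hg φ₀ hφf hφid v.2⟩,
           fun v => ⟨ψ₀ v, mapMem hT hS g f hg hf ψ₀ hψg hψid v.2⟩,
           fun v => Subtype.ext (invOn hT hS f g hf hg φ₀ ψ₀ hφf hφid hψg hψid v.2),
           fun v => Subtype.ext (invOn hT hS g f hg hf ψ₀ φ₀ hψg hψid hφf hφid v.2)⟩,
         Subtype.ext hφr, ?_⟩
  intro u v
  constructor
  · intro h
    exact edgeStep hT hS f g hf hg φ₀ hφf hφid v.2 h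
  · intro h
    have h' : E (φ₀ ↑u) (φ₀ ↑v) := h
    have h2 := edgeStep hT hS g f hg hf ψ₀ hψg hψid
      (mapMem hT hS f g hf hg φ₀ hφf hφid v.2) h'
    rwa [invOn hT hS f g hf hg φ₀ ψ₀ hφf hφid hψg hψid u.2,
         invOn hT hS f g hf hg φ₀ ψ₀ hφf hφid hψg hψid v.2] at h2
end

section
/- Let (V, E, r) be a rooted tree and let w be a vertex such that every vertex on the E-path from r to w other than w itself has exactly one child, and suppose w has at least two children; let C be the set of children of w. Then for every sweep-cover S of (V, E, r) with |S| ≥ 2: (i) every member T ∈ S satisfies either T ⊆ C, or there is a unique c ∈ C such that every element of T is a descendant of c; and (ii) for every c ∈ C, either c belongs to some member of S, or the collection S_c = { T ∈ S : every element of T is a descendant of c } is a sweep-cover of the subtree rooted at c. In other words, every sweep-cover of size greater than 1 arises from a partition of C together with sweep-covers of the subtrees rooted at the children in singleton blocks. -/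
/-- The vertex set of the subtree rooted at `c`: `c` together with all its descendants. -/
def subtreeSet {V : Type*} (E : V → V → Prop) (c : V) : Set V :=
  insert c {u | Relation.TransGen E c u}

open Relation

section Aux
variable {V : Type*} {E : V → V → Prop} {r : V}

lemma no_cycle_s9 (hT : IsRootedTree E r) (v : V) : ¬ TransGen E v v := by
  have hr := hT.reachable v
  induction hr with
  | refl =>
    intro h
    obtain ⟨y, _, hy⟩ := TransGen.tail'_iff.mp h
    exact hT.not_edge_root y hy
  | @tail b c hrb hbc ih =>
    intro h
    obtain ⟨y, hcy, hyc⟩ := TransGen.tail'_iff.mp h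
    have hcr : c ≠ r := fun e => hT.not_edge_root b (e ▸ hbc)
    obtain ⟨p, hp, hup⟩ := hT.unique_parent c hcr
    have hyb : y = b := (hup y hyc).trans (hup b hbc).symm
    subst hyb
    exact ih (TransGen.head' hbc hcy)

lemma ancestors_comparable (hT : IsRootedTree E r) :
    ∀ {x a b : V}, ReflTransGen E a x → ReflTransGen E b x →
      ReflTransGen E a b ∨ ReflTransGen E b a := by
  intro x a b hax
  induction hax with
  | refl => exact fun hbx => Or.inr hbx
  | @tail y x hay hyx ih =>
    intro hbx
    rcases ReflTransGen.cases_tail hbx with rfl | ⟨z, hbz, hzx⟩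
    · exact Or.inl (hay.tail hyx)
    · have hxr : x ≠ r := fun e => hT.not_edge_root y (e ▸ hyx)
      obtain ⟨p, hp, hup⟩ := hT.unique_parent x hxr
      have : z = y := (hup z hzx).trans (hup y hyx).symm
      exact ih (this ▸ hbz)

lemma sibling_not_desc (hT : IsRootedTree E r) {p c c' : V}
    (h1 : E p c) (h2 : E p c') : ¬ TransGen E c c' := by
  intro h
  obtain ⟨y, hcy, hyc'⟩ := TransGen.tail'_iff.mp h
  have hcr : c' ≠ r := fun e => hT.not_edge_root p (e ▸ h2)
  obtain ⟨q, hq, huq⟩ := hT.unique_parent c' hcr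
  have hyp : y = p := (huq y hyc').trans (huq p h2).symm
  rw [hyp] at hcy
  exact no_cycle_s9 hT p (TransGen.head' h1 hcy)

lemma chain_or_desc (hT : IsRootedTree E r) (w : V)
    (hpath : ∀ u, TransGen E u w → ∃! x : V, E u x) :
    ∀ v, ReflTransGen E v w ∨ TransGen E w v := by
  intro v
  have hr := hT.reachable v
  induction hr with
  | refl => exact Or.inl (hT.reachable w)
  | @tail y v hry hyv ih =>
    rcases ih with hyw | hwy
    · rcases ReflTransGen.cases_head hyw with rfl | ⟨z, hyz, hzw⟩
      · exact Or.inr (TransGen.single hyv)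
      · obtain ⟨x, hx, hux⟩ := hpath y (TransGen.head' hyz hzw)
        have : v = z := (hux v hyv).trans (hux z hyz).symm
        exact Or.inl (this ▸ hzw)
    · exact Or.inr (hwy.tail hyv)

lemma mem_subtree_of_trans {c a b : V} (ha : a ∈ subtreeSet E c)
    (h : TransGen E a b) : b ∈ subtreeSet E c := by
  rcases ha with rfl | ha
  · exact Or.inr h
  · exact Or.inr (ha.trans h)

lemma lift_transGen {c : V} :
    ∀ {a b : V} (ha : a ∈ subtreeSet E c) (h : TransGen E a b),
    ∃ hb : b ∈ subtreeSet E c,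
      TransGen (fun x y : ↥(subtreeSet E c) => E ↑x ↑y) ⟨a, ha⟩ ⟨b, hb⟩ := by
  intro a b ha h
  induction h with
  | @single b hab =>
    exact ⟨mem_subtree_of_trans ha (TransGen.single hab), TransGen.single hab⟩
  | @tail b b' hab hbb' ih =>
    obtain ⟨hb, htg⟩ := ih
    exact ⟨mem_subtree_of_trans hb (TransGen.single hbb'), htg.tail hbb'⟩

lemma proj_transGen {c : V} {a b : ↥(subtreeSet E c)}
    (h : TransGen (fun x y : ↥(subtreeSet E c) => E ↑x ↑y) a b) :
    TransGen E ↑a ↑b := by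
  induction h with
  | single hab => exact TransGen.single hab
  | tail _ hbc ih => exact ih.tail hbc

end Aux

/-- Let `w` be such that every strict ancestor of `w` has exactly one child,
and suppose `w` has at least two children, with `C` the set of children of `w`. Then for
every sweep-cover `S` with `|S| ≥ 2`: (i) every member `T ∈ S` is either a subset of `C`
or all of its elements are descendants of a unique `c ∈ C`; and (ii) for every `c ∈ C`,
either `c` belongs to some member of `S`, or the members of `S` whose elements are all
descendants of `c` form a sweep-cover of the subtree rooted at `c`. -/
theorem sweepCover_size_ge_two_decomposition
    {V : Type*} (E : V → V → Prop) (r : V) (hT : IsRootedTree E r)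
    (w : V) (hpath : ∀ u, Relation.TransGen E u w → ∃! x : V, E u x)
    (C : Set V) (hC : C = {c | E w c})
    (hC2 : ∃ c₁ ∈ C, ∃ c₂ ∈ C, c₁ ≠ c₂) :
    ∀ S : Set (Set V), IsSweepCover E r S → 2 ≤ S.ncard →
      (∀ T ∈ S, T ⊆ C ∨ ∃! c : V, c ∈ C ∧ ∀ x ∈ T, Relation.TransGen E c x) ∧
      (∀ c ∈ C,
        (∃ T ∈ S, c ∈ T) ∨
        IsSweepCover (fun a b : ↥(subtreeSet E c) => E ↑a ↑b) ⟨c, Set.mem_insert c _⟩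
          ((fun T : Set V => (Subtype.val ⁻¹' T : Set ↥(subtreeSet E c))) ''
            {T ∈ S | ∀ x ∈ T, Relation.TransGen E c x})) := by
  subst hC
  intro S hS hcard
  -- every element of ⋃₀ S is a strict descendant of w
  have hU : ∀ u ∈ ⋃₀ S, TransGen E w u := by
    intro u hu
    rcases chain_or_desc hT w hpath u with huw | hwu
    · -- contradiction: S would be a single singleton
      exfalso
      obtain ⟨T0, hT0, huT0⟩ := hu
      have hsingle : ∀ v ∈ ⋃₀ S, v = u := by
        intro v hv
        by_contra hne
        have h1 := hS.antichain u ⟨T0, hT0, huT0⟩ v hv (Ne.symm hne)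
        have h2 := hS.antichain v hv u ⟨T0, hT0, huT0⟩ hne
        rcases chain_or_desc hT w hpath v with hvw | hwv
        · rcases ancestors_comparable hT huw hvw with h | h
          · rcases reflTransGen_iff_eq_or_transGen.mp h with h' | h'
            · exact hne h'
            · exact h1 h'
          · rcases reflTransGen_iff_eq_or_transGen.mp h with h' | h'
            · exact hne h'.symm
            · exact h2 h'
        · exact h1 (TransGen.trans_right huw hwv)
      have hSsub : S ⊆ {{u}} := by
        intro T hTmem
        obtain ⟨x, hx⟩ := hS.mem_nonempty T hTmem
        have hTu : T = {u} := by
          apply Set.eq_singleton_iff_nonempty_unique_mem.mpr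
          exact ⟨⟨x, hx⟩, fun y hy => hsingle y ⟨T, hTmem, hy⟩⟩
        simp [hTu]
      have := Set.ncard_le_ncard hSsub (Set.finite_singleton _)
      simp [Set.ncard_singleton] at this
      omega
    · exact hwu
  -- siblings are not comparable
  have hsib : ∀ {c c' : V}, E w c → E w c' → TransGen E c c' → False := by
    intro c c' h1 h2 h
    exact sibling_not_desc hT h1 h2 h
  -- Part (i)
  have hpartI : ∀ T ∈ S, T ⊆ {c | E w c} ∨
      ∃! c : V, c ∈ {c | E w c} ∧ ∀ x ∈ T, TransGen E c x := by
    intro T hTS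
    rcases hS.siblings T hTS with rfl | ⟨p, hp⟩
    · -- T = {r}: impossible
      exfalso
      have := hU r ⟨{r}, hTS, rfl⟩
      obtain ⟨y, _, hy⟩ := TransGen.tail'_iff.mp this
      exact hT.not_edge_root y hy
    · by_cases hpw : p = w
      · exact Or.inl (fun x hx => hpw ▸ hp x hx)
      · right
        obtain ⟨x0, hx0⟩ := hS.mem_nonempty T hTS
        have hwx0 : TransGen E w x0 := hU x0 ⟨T, hTS, hx0⟩
        have hx0r : x0 ≠ r := fun e => hT.not_edge_root p (e ▸ hp x0 hx0)
        obtain ⟨q, hq, huq⟩ := hT.unique_parent x0 hx0r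
        obtain ⟨y, hwy, hyx0⟩ := TransGen.tail'_iff.mp hwx0
        have hyp : y = p := (huq y hyx0).trans (huq p (hp x0 hx0)).symm
        rw [hyp] at hwy
        have hwp : TransGen E w p := by
          rcases reflTransGen_iff_eq_or_transGen.mp hwy with h | h
          · exact absurd h hpw
          · exact h
        obtain ⟨c0, hwc0, hc0p⟩ := TransGen.head'_iff.mp hwp
        have hall : ∀ x ∈ T, TransGen E c0 x :=
          fun x hx => TransGen.tail' hc0p (hp x hx)
        refine ⟨c0, ⟨hwc0, hall⟩, ?_⟩
        rintro c' ⟨hwc', hall'⟩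
        by_contra hne
        rcases ancestors_comparable hT (hall' x0 hx0).to_reflTransGen
            (hall x0 hx0).to_reflTransGen with h | h
        · rcases reflTransGen_iff_eq_or_transGen.mp h with h' | h'
          · exact hne h'.symm
          · exact hsib hwc' hwc0 h'
        · rcases reflTransGen_iff_eq_or_transGen.mp h with h' | h'
          · exact hne h'
          · exact hsib hwc0 hwc' h'
  refine ⟨hpartI, ?_⟩
  -- Part (ii)
  intro c hcC
  by_cases hc : ∃ T ∈ S, c ∈ T
  · exact Or.inl hc
  right
  have hcr : c ≠ r := fun e => hT.not_edge_root w (e ▸ hcC)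
  -- if one element of T is a strict descendant of c, all are
  have hmemS : ∀ T ∈ S, ∀ u ∈ T, TransGen E c u → ∀ x ∈ T, TransGen E c x := by
    intro T hTS u huT hcu
    rcases hpartI T hTS with hsub | ⟨c', ⟨hwc', hall'⟩, _⟩
    · exact absurd hcu (fun h => hsib hcC (hsub huT) h)
    · have hc'c : c' = c := by
        by_contra hne
        rcases ancestors_comparable hT (hall' u huT).to_reflTransGen
            hcu.to_reflTransGen with h | h
        · rcases reflTransGen_iff_eq_or_transGen.mp h with h' | h'
          · exact hne h'.symm
          · exact hsib hwc' hcC h'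
        · rcases reflTransGen_iff_eq_or_transGen.mp h with h' | h'
          · exact hne h'
          · exact hsib hcC hwc' h'
      exact hc'c ▸ hall'
  -- ancestors of w cannot be in ⋃₀ S; use: u ∈ ⋃₀S and ReflTransGen u w → False
  have hnotanc : ∀ u ∈ ⋃₀ S, ¬ ReflTransGen E u w := by
    intro u hu huw
    exact no_cycle_s9 hT u (TransGen.trans_right huw (hU u hu))
  -- u ∈ ⋃₀ S and TransGen u (something in subtree of c) cannot be an ancestor of c
  have hnotancc : ∀ u ∈ ⋃₀ S, ¬ TransGen E u c := by
    intro u hu huc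
    obtain ⟨y, huy, hyc⟩ := TransGen.tail'_iff.mp huc
    obtain ⟨q, hq, huq⟩ := hT.unique_parent c hcr
    have : y = w := (huq y hyc).trans (huq w hcC).symm
    exact hnotanc u hu (this ▸ huy)
  set f : Set V → Set ↥(subtreeSet E c) := fun T => (Subtype.val ⁻¹' T) with hf
  set Sc : Set (Set V) := {T ∈ S | ∀ x ∈ T, TransGen E c x} with hSc
  constructor
  · exact ((hS.finite.subset (Set.sep_subset _ _))).image _
  · rintro T' ⟨T, ⟨hTS, hall⟩, rfl⟩
    exact (hS.mem_finite T hTS).preimage (Subtype.val_injective.injOn)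
  · rintro T' ⟨T, ⟨hTS, hall⟩, rfl⟩
    obtain ⟨x, hx⟩ := hS.mem_nonempty T hTS
    exact ⟨⟨x, Or.inr (hall x hx)⟩, hx⟩
  · rintro A ⟨T, ⟨hTS, hallT⟩, rfl⟩ B ⟨T', ⟨hT'S, hallT'⟩, rfl⟩ hne
    have hTT' : T ≠ T' := fun h => hne (by rw [h])
    exact (hS.pairwiseDisjoint T hTS T' hT'S hTT').preimage Subtype.val
  · rintro A ⟨T, ⟨hTS, hallT⟩, rfl⟩
    rcases hS.siblings T hTS with rfl | ⟨p, hp⟩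
    · exfalso
      obtain ⟨y, _, hy⟩ := TransGen.tail'_iff.mp (hallT r rfl)
      exact hT.not_edge_root y hy
    · right
      obtain ⟨x0, hx0⟩ := hS.mem_nonempty T hTS
      have hx0r : x0 ≠ r := fun e => hT.not_edge_root p (e ▸ hp x0 hx0)
      obtain ⟨q, hq, huq⟩ := hT.unique_parent x0 hx0r
      obtain ⟨y, hcy, hyx0⟩ := TransGen.tail'_iff.mp (hallT x0 hx0)
      have hyp : y = p := (huq y hyx0).trans (huq p (hp x0 hx0)).symm
      rw [hyp] at hcy
      have hpmem : p ∈ subtreeSet E c := by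
        rcases reflTransGen_iff_eq_or_transGen.mp hcy with h | h
        · exact h ▸ Set.mem_insert _ _
        · exact Or.inr h
      exact ⟨⟨p, hpmem⟩, fun v hv => hp ↑v hv⟩
  · rintro ⟨v, hv⟩
    rcases hS.covers v with ⟨T, hTS, hvT⟩ | ⟨u, ⟨T, hTS, huT⟩, hvu⟩ | ⟨u, ⟨T, hTS, huT⟩, huv⟩
    · -- v itself is covered
      have hcv : TransGen E c v := by
        rcases hv with rfl | h
        · exact absurd ⟨T, hTS, hvT⟩ hc
        · exact h
      exact Or.inl ⟨f T, ⟨T, ⟨hTS, hmemS T hTS v hvT hcv⟩, rfl⟩, hvT⟩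
    · -- v is an ancestor of covered u
      have hcu : TransGen E c u := by
        rcases hv with rfl | h
        · exact hvu
        · exact h.trans hvu
      obtain ⟨hu, htg⟩ := lift_transGen hv hvu
      exact Or.inr (Or.inl ⟨⟨u, hu⟩,
        ⟨f T, ⟨T, ⟨hTS, hmemS T hTS u huT hcu⟩, rfl⟩, huT⟩, htg⟩)
    · -- v is a descendant of covered u
      have hcu : TransGen E c u := by
        rcases hv with rfl | h
        · exact absurd huv (hnotancc u ⟨T, hTS, huT⟩)
        · rcases ancestors_comparable hT h.to_reflTransGen huv.to_reflTransGen
              with h' | h'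
          · rcases reflTransGen_iff_eq_or_transGen.mp h' with h'' | h''
            · exact absurd (h'' ▸ huT) (fun hh => hc ⟨T, hTS, hh⟩)
            · exact h''
          · rcases reflTransGen_iff_eq_or_transGen.mp h' with h'' | h''
            · exact absurd (h'' ▸ huT) (fun hh => hc ⟨T, hTS, hh⟩)
            · exact absurd h'' (hnotancc u ⟨T, hTS, huT⟩)
      have humem : u ∈ subtreeSet E c := Or.inr hcu
      obtain ⟨hv', htg⟩ := lift_transGen humem huv
      exact Or.inr (Or.inr ⟨⟨u, humem⟩,
        ⟨f T, ⟨T, ⟨hTS, hmemS T hTS u huT hcu⟩, rfl⟩, huT⟩, htg⟩)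
  · rintro u ⟨A, ⟨T, ⟨hTS, hallT⟩, rfl⟩, huA⟩ v ⟨B, ⟨T', ⟨hT'S, hallT'⟩, rfl⟩, hvB⟩ hne htg
    have hne' : (↑u : V) ≠ ↑v := fun h => hne (Subtype.ext h)
    exact hS.antichain ↑u ⟨T, hTS, huA⟩ ↑v ⟨T', hT'S, hvB⟩ hne' (proj_transGen htg)
end

section
/- For Δ = 2 and γ = 0, the recursively defined sweep-cover enumeration function satisfies P_{2,0}(n) = catalan(n − 1) for every n ≥ 1, where catalan(k) denotes the k-th Catalan number (catalan(0) = 1). Equivalently, P_{2,0}(1) = 1 and for n ≥ 2 the recursion reduces to Segner's recurrence P_{2,0}(n) = ∑_{i=1}^{n−1} P_{2,0}(i) · P_{2,0}(n−i), whose solution is the shifted Catalan sequence 1, 1, 2, 5, 14, 42, …. -/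
/-- `Lfun P m i` is the sum, over all ordered `i`-tuples `(k_1, …, k_i)` of positive
integers with `k_1 + ⋯ + k_i = m`, of `∏ j, P (k j)` (an empty sum is `0`). -/
def Lfun (P : ℕ → ℕ) (m i : ℕ) : ℕ :=
  ∑ k ∈ (Finset.Nat.antidiagonalTuple i m).filter (fun k => ∀ j, 0 < k j),
    ∏ j, P (k j)

/-- `Rnum n m` is the number of set partitions of an `n`-element set into exactly `m`
blocks, each of size at least `2`. -/
noncomputable def Rnum (n m : ℕ) : ℕ :=
  Set.ncard {P : Finset (Finset (Fin n)) |
    P.card = m ∧ (∀ B ∈ P, 2 ≤ B.card) ∧ ∀ x : Fin n, ∃! B, B ∈ P ∧ x ∈ B}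

/-- `P` is the recursively defined sweep-cover enumeration function `P_{Δ,γ}`:
`P 1 = γ + 1` and for `n ≥ 2`,
`P n = ∑_{l=1}^{Δ-2} (Δ choose l) ∑_{r=1}^{Δ-l} L(n-r, l) R(Δ-l, r) + L(n, Δ) + R(Δ, n)`. -/
def IsSweepEnum (Δ γ : ℕ) (P : ℕ → ℕ) : Prop :=
  P 1 = γ + 1 ∧
  ∀ n, 2 ≤ n →
    P n = (∑ l ∈ Finset.Icc 1 (Δ - 2), Nat.choose Δ l *
             ∑ r ∈ Finset.Icc 1 (Δ - l), Lfun P (n - r) l * Rnum (Δ - l) r)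
          + Lfun P n Δ + Rnum Δ n


/-! For `Δ = 2` the sum over `l ∈ [1, Δ - 2]` is empty and `R(2, n) = 0` for `n ≥ 2` (a partition
into `n` blocks of size `≥ 2` needs `2n` points), so only `L(n, 2)` survives. Shifting both parts
of a composition `n = i + j` by one turns it into Segner's recurrence for `n ↦ P (n + 1)`, which
with `P 1 = 1` determines the Catalan numbers. -/

open Finset

lemma Rnum_eq_zero_of_lt {n m : ℕ} (h : n < 2 * m) : Rnum n m = 0 := by
  rw [Rnum, Set.ncard_eq_zero, Set.eq_empty_iff_forall_notMem]
  rintro Q ⟨rfl, hblocks, hunique⟩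
  have hdisj : (Q : Set (Finset (Fin n))).PairwiseDisjoint id := by
    intro B hB B' hB' hne
    refine Finset.disjoint_left.mpr fun x hxB hxB' => hne ?_
    exact (hunique x).unique ⟨hB, hxB⟩ ⟨hB', hxB'⟩
  have hsum : 2 * Q.card ≤ n := calc
    2 * Q.card = ∑ _B ∈ Q, 2 := by rw [sum_const, smul_eq_mul, mul_comm]
    _ ≤ ∑ B ∈ Q, B.card := sum_le_sum hblocks
    _ = (Q.biUnion id).card := (card_biUnion hdisj).symm
    _ ≤ n := card_le_univ _ |>.trans_eq (Fintype.card_fin n)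
  omega

lemma Lfun_two_succ_succ (P : ℕ → ℕ) (n : ℕ) :
    Lfun P (n + 2) 2 = ∑ ij ∈ antidiagonal n, P (ij.1 + 1) * P (ij.2 + 1) := by
  rw [Lfun, Nat.antidiagonalTuple_two, filter_map, sum_map, sum_filter,
    Nat.sum_antidiagonal_succ, Nat.sum_antidiagonal_succ']
  simp [Fin.forall_fin_two, Fin.prod_univ_two]

theorem eq_catalan_of_recurrence {f : ℕ → ℕ} (h0 : f 0 = 1)
    (hsucc : ∀ n, f (n + 1) = ∑ ij ∈ antidiagonal n, f ij.1 * f ij.2) (n : ℕ) :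
    f n = catalan n := by
  induction n using Nat.strong_induction_on with
  | _ n ih =>
    rcases n with _ | n
    · rw [h0, catalan_zero]
    · rw [hsucc, catalan_succ']
      refine sum_congr rfl fun ij hij => ?_
      have hsum := mem_antidiagonal.mp hij
      rw [ih _ (by omega), ih _ (by omega)]

/-- For `Δ = 2`, `γ = 0`, the recursively defined sweep-cover enumeration
function satisfies `P_{2,0}(n) = catalan (n - 1)` for every `n ≥ 1`. -/
theorem sweepEnum_two_zero_eq_catalan (P : ℕ → ℕ) (hP : IsSweepEnum 2 0 P) :
    ∀ n : ℕ, 1 ≤ n → P n = catalan (n - 1) := by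
  have hsegner : ∀ n, P (n + 2) = ∑ ij ∈ antidiagonal n, P (ij.1 + 1) * P (ij.2 + 1) := by
    intro n
    rw [hP.2 (n + 2) (by omega), Rnum_eq_zero_of_lt (by omega), Lfun_two_succ_succ]
    simp
  intro n hn
  obtain ⟨k, rfl⟩ := Nat.exists_eq_add_of_le' hn
  exact eq_catalan_of_recurrence (f := fun k => P (k + 1)) hP.1 hsegner k
end

section
/- For every fixed n ≥ 1 and γ ≥ 0 there exist constants c, C > 0 such that the recursively defined sweep-cover enumeration function satisfies P_{Δ,γ}(n) ≤ C · Δ^c · c^Δ for all Δ ≥ 2; that is, with n and γ held constant, P_{Δ,γ}(n) = O(Δ^c · c^Δ) as Δ → ∞. -/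
open Finset

section FiberPartition

variable {α : Type*} [Fintype α] [DecidableEq α]

def fiberPartition {r : ℕ} (f : α → Fin r) : Finset (Finset α) :=
  univ.image fun x => ({y | f y = f x} : Finset α)

lemma exists_fiberPartition_eq {P : Finset (Finset α)} (hne : ∀ B ∈ P, B.Nonempty)
    (hcover : ∀ x, ∃! B, B ∈ P ∧ x ∈ B) : ∃ f : α → Fin #P, fiberPartition f = P := by
  choose block hblock hblock_unique using hcover
  have block_eq {x : α} {B : Finset α} (hB : B ∈ P) (hx : x ∈ B) : block x = B :=
    (hblock_unique x B ⟨hB, hx⟩).symm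
  let e := P.equivFin
  refine ⟨fun x => e ⟨block x, (hblock x).1⟩, ?_⟩
  have fiber_eq (x : α) : ({y | e ⟨block y, (hblock y).1⟩ = e ⟨block x, (hblock x).1⟩} : Finset α)
      = block x := by
    ext y
    simp only [mem_filter, mem_univ, true_and, e.apply_eq_iff_eq, Subtype.mk.injEq]
    exact ⟨fun h => h ▸ (hblock y).2, fun hy => block_eq (hblock x).1 hy⟩
  ext B
  simp only [fiberPartition, fiber_eq, mem_image, mem_univ, true_and]
  refine ⟨?_, fun hB => ?_⟩
  · rintro ⟨x, rfl⟩
    exact (hblock x).1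
  · obtain ⟨x, hx⟩ := hne B hB
    exact ⟨x, block_eq hB hx⟩

end FiberPartition

lemma Rnum_le_pow (a r : ℕ) : Rnum a r ≤ r ^ a := by
  have hsub : {P : Finset (Finset (Fin a)) |
      P.card = r ∧ (∀ B ∈ P, 2 ≤ B.card) ∧ ∀ x : Fin a, ∃! B, B ∈ P ∧ x ∈ B}
      ⊆ Set.range (fiberPartition (r := r)) := by
    rintro P ⟨rfl, hsize, hcover⟩
    exact exists_fiberPartition_eq (fun B hB => card_pos.mp (two_pos.trans_le (hsize B hB))) hcover
  calc Rnum a r ≤ (Set.range (fiberPartition (α := Fin a) (r := r))).ncard :=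
        Set.ncard_le_ncard hsub
    _ ≤ Nat.card (Fin a → Fin r) := Finite.card_range_le _
    _ = r ^ a := by simp

def compositionTuples (i m : ℕ) : Finset (Fin i → ℕ) :=
  (Finset.Nat.antidiagonalTuple i m).filter (fun k => ∀ j, 0 < k j)

section CompositionTuples

variable {i m : ℕ} {k : Fin i → ℕ}

lemma mem_compositionTuples : k ∈ compositionTuples i m ↔ ∑ j, k j = m ∧ ∀ j, 0 < k j := by
  simp [compositionTuples, Finset.Nat.mem_antidiagonalTuple]

lemma pos_of_mem_compositionTuples (hk : k ∈ compositionTuples i m) (j : Fin i) : 0 < k j :=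
  (mem_compositionTuples.mp hk).2 j

lemma le_of_mem_compositionTuples (hk : k ∈ compositionTuples i m) (j : Fin i) : k j ≤ m :=
  (mem_compositionTuples.mp hk).1 ▸ single_le_sum (fun _ _ => Nat.zero_le _) (mem_univ j)

lemma lt_of_mem_compositionTuples (hk : k ∈ compositionTuples i m) (hi : 2 ≤ i) (j : Fin i) :
    k j < m := by
  obtain ⟨hsum, hpos⟩ := mem_compositionTuples.mp hk
  have : Nontrivial (Fin i) := Fin.nontrivial_iff_two_le.mpr hi
  obtain ⟨j', hj'⟩ := exists_ne j
  have hpair : k j + k j' ≤ m := by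
    rw [← sum_pair hj'.symm, ← hsum]
    exact sum_le_sum_of_subset (subset_univ _)
  have := hpos j'
  omega

lemma card_le_of_mem_compositionTuples (hk : k ∈ compositionTuples i m) : i ≤ m := by
  obtain ⟨hsum, hpos⟩ := mem_compositionTuples.mp hk
  simpa [← hsum] using sum_le_sum fun j (_ : j ∈ univ) => Nat.one_le_iff_ne_zero.mpr (hpos j).ne'

lemma compositionTuples_eq_empty (h : m < i) : compositionTuples i m = ∅ :=
  eq_empty_of_forall_notMem fun _ hk => (card_le_of_mem_compositionTuples hk).not_gt h

lemma card_compositionTuples_le : #(compositionTuples i m) ≤ (m + 1) ^ m := by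
  rcases lt_or_ge m i with h | h
  · simp [compositionTuples_eq_empty h]
  calc #(compositionTuples i m) ≤ #(Fintype.piFinset fun _ : Fin i => range (m + 1)) :=
        card_le_card fun k hk => Fintype.mem_piFinset.mpr fun j =>
          mem_range.mpr (Nat.lt_succ_of_le (le_of_mem_compositionTuples hk j))
    _ = (m + 1) ^ i := by simp
    _ ≤ (m + 1) ^ m := Nat.pow_le_pow_right m.succ_pos h

end CompositionTuples

section Lfun

variable {P : ℕ → ℕ} {m i : ℕ}

lemma Lfun_eq_sum_compositionTuples :
    Lfun P m i = ∑ k ∈ compositionTuples i m, ∏ j, P (k j) := rfl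

lemma Lfun_eq_zero (h : m < i) : Lfun P m i = 0 := by
  rw [Lfun_eq_sum_compositionTuples, compositionTuples_eq_empty h, sum_empty]

lemma Lfun_le_of_le_pow {X : ℕ}
    (hP : ∀ k ∈ compositionTuples i m, ∀ j, P (k j) ≤ X ^ (2 * k j - 1)) :
    Lfun P m i ≤ (m + 1) ^ m * X ^ (2 * m - i) := by
  have hprod : ∀ k ∈ compositionTuples i m, ∏ j, P (k j) ≤ X ^ (2 * m - i) := by
    intro k hk
    obtain ⟨hsum, hpos⟩ := mem_compositionTuples.mp hk
    have hexp : ∑ j, (2 * k j - 1) = 2 * m - i := by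
      rw [sum_tsub_distrib _ fun j _ => by have := hpos j; omega, ← mul_sum, hsum]
      simp
    calc ∏ j, P (k j) ≤ ∏ j, X ^ (2 * k j - 1) := prod_le_prod' fun j _ => hP k hk j
      _ = X ^ (2 * m - i) := by rw [prod_pow_eq_pow_sum, hexp]
  calc Lfun P m i ≤ #(compositionTuples i m) * X ^ (2 * m - i) := by
        simpa [Lfun_eq_sum_compositionTuples] using sum_le_card_nsmul _ _ _ hprod
    _ ≤ (m + 1) ^ m * X ^ (2 * m - i) := Nat.mul_le_mul_right _ card_compositionTuples_le

end Lfun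

lemma sum_Icc_one_le_mul {f : ℕ → ℕ} {n b : ℕ} (h : ∀ x ∈ Icc 1 n, f x ≤ b) :
    ∑ x ∈ Icc 1 n, f x ≤ n * b := by
  simpa using sum_le_card_nsmul _ _ _ h

section SweepBound

variable {Δ γ N X j : ℕ} {P : ℕ → ℕ}

lemma sum_choose_mul_sum_Lfun_mul_Rnum_le (hX : 1 ≤ X) (hj : 2 ≤ j) (hjN : j ≤ N)
    (ih : ∀ k, 0 < k → k < j → P k ≤ X ^ (2 * k - 1)) :
    ∑ l ∈ Icc 1 (Δ - 2), Δ.choose l * ∑ r ∈ Icc 1 (Δ - l), Lfun P (j - r) l * Rnum (Δ - l) r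
      ≤ (N + 1) ^ N * Δ ^ 2 * (2 * (N + 1)) ^ Δ * X ^ (2 * j - 3) := by
  have hterm : ∀ l ∈ Icc 1 (Δ - 2), ∀ r ∈ Icc 1 (Δ - l),
      Lfun P (j - r) l * Rnum (Δ - l) r ≤ (N + 1) ^ N * X ^ (2 * j - 3) * (N + 1) ^ Δ := by
    intro l hl r hr
    rw [mem_Icc] at hl hr
    rcases lt_or_ge r j with hrj | hrj
    · apply Nat.mul_le_mul
      · calc Lfun P (j - r) l ≤ (j - r + 1) ^ (j - r) * X ^ (2 * (j - r) - l) :=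
              Lfun_le_of_le_pow fun k hk t => ih _ (pos_of_mem_compositionTuples hk t)
                ((le_of_mem_compositionTuples hk t).trans_lt (by omega))
          _ ≤ (N + 1) ^ N * X ^ (2 * j - 3) :=
              Nat.mul_le_mul ((Nat.pow_le_pow_left (by omega) _).trans
                (Nat.pow_le_pow_right (by omega) (by omega)))
                (Nat.pow_le_pow_right hX (by omega))
      · calc Rnum (Δ - l) r ≤ r ^ (Δ - l) := Rnum_le_pow _ _
          _ ≤ (N + 1) ^ Δ := (Nat.pow_le_pow_left (by omega) _).trans
              (Nat.pow_le_pow_right (by omega) (by omega))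
    · rw [Lfun_eq_zero (by omega), zero_mul]
      exact Nat.zero_le _
  calc ∑ l ∈ Icc 1 (Δ - 2), Δ.choose l * ∑ r ∈ Icc 1 (Δ - l), Lfun P (j - r) l * Rnum (Δ - l) r
      ≤ ∑ l ∈ Icc 1 (Δ - 2), 2 ^ Δ * (Δ * ((N + 1) ^ N * X ^ (2 * j - 3) * (N + 1) ^ Δ)) :=
        sum_le_sum fun l hl => Nat.mul_le_mul (Nat.choose_le_two_pow _ _)
          ((sum_Icc_one_le_mul (hterm l hl)).trans (Nat.mul_le_mul_right _ (by omega)))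
    _ ≤ Δ * (2 ^ Δ * (Δ * ((N + 1) ^ N * X ^ (2 * j - 3) * (N + 1) ^ Δ))) := by
        rw [sum_const, Nat.card_Icc, smul_eq_mul]
        exact Nat.mul_le_mul_right _ (by omega)
    _ = (N + 1) ^ N * Δ ^ 2 * (2 * (N + 1)) ^ Δ * X ^ (2 * j - 3) := by rw [mul_pow]; ring

lemma IsSweepEnum.le_pow_of_forall_lt (hP : IsSweepEnum Δ γ P) (hΔ : 2 ≤ Δ)
    (hX : 3 * ((N + 1) ^ N * Δ ^ 2 * (2 * (N + 1)) ^ Δ) ≤ X) (hj : 2 ≤ j) (hjN : j ≤ N)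
    (ih : ∀ k, 0 < k → k < j → P k ≤ X ^ (2 * k - 1)) :
    P j ≤ X ^ (2 * j - 1) := by
  set Y := (N + 1) ^ N * Δ ^ 2 * (2 * (N + 1)) ^ Δ with hYdef
  have hX1 : 1 ≤ X := (show 0 < 3 * Y by positivity).trans_le hX
  have hXpow : 1 ≤ X ^ (2 * j - 2) := Nat.one_le_pow _ _ hX1
  have hNY : (N + 1) ^ N ≤ Y := by
    rw [hYdef, mul_assoc]
    exact Nat.le_mul_of_pos_right _ (by positivity)
  have hfirst : ∑ l ∈ Icc 1 (Δ - 2), Δ.choose l *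
      ∑ r ∈ Icc 1 (Δ - l), Lfun P (j - r) l * Rnum (Δ - l) r ≤ Y * X ^ (2 * j - 2) :=
    (sum_choose_mul_sum_Lfun_mul_Rnum_le hX1 hj hjN ih).trans
      (Nat.mul_le_mul_left _ (Nat.pow_le_pow_right hX1 (by omega)))
  have hsecond : Lfun P j Δ ≤ Y * X ^ (2 * j - 2) :=
    calc Lfun P j Δ ≤ (j + 1) ^ j * X ^ (2 * j - Δ) :=
          Lfun_le_of_le_pow fun k hk t => ih _ (pos_of_mem_compositionTuples hk t)
            (lt_of_mem_compositionTuples hk hΔ t)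
      _ ≤ (N + 1) ^ N * X ^ (2 * j - 2) := Nat.mul_le_mul
          ((Nat.pow_le_pow_left (by omega) _).trans (Nat.pow_le_pow_right (by omega) hjN))
          (Nat.pow_le_pow_right hX1 (by omega))
      _ ≤ Y * X ^ (2 * j - 2) := Nat.mul_le_mul_right _ hNY
  have hthird : Rnum Δ j ≤ Y * X ^ (2 * j - 2) :=
    calc Rnum Δ j ≤ j ^ Δ := Rnum_le_pow _ _
      _ ≤ (2 * (N + 1)) ^ Δ := Nat.pow_le_pow_left (by omega) _
      _ ≤ Y := Nat.le_mul_of_pos_left _ (by positivity)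
      _ ≤ Y * X ^ (2 * j - 2) := Nat.le_mul_of_pos_right _ hXpow
  calc P j ≤ Y * X ^ (2 * j - 2) + Y * X ^ (2 * j - 2) + Y * X ^ (2 * j - 2) :=
        (hP.2 j hj).trans_le (add_le_add (add_le_add hfirst hsecond) hthird)
    _ = 3 * Y * X ^ (2 * j - 2) := by ring
    _ ≤ X * X ^ (2 * j - 2) := Nat.mul_le_mul_right _ hX
    _ = X ^ (2 * j - 1) := by rw [← pow_succ']; congr 1; omega

theorem IsSweepEnum.le_pow (hP : IsSweepEnum Δ γ P) (hΔ : 2 ≤ Δ) (hγX : γ + 1 ≤ X)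
    (hX : 3 * ((N + 1) ^ N * Δ ^ 2 * (2 * (N + 1)) ^ Δ) ≤ X) :
    ∀ j, 0 < j → j ≤ N → P j ≤ X ^ (2 * j - 1) := by
  intro j
  induction j using Nat.strong_induction_on with
  | _ j ih =>
    intro hj hjN
    rcases (show j = 1 ∨ 2 ≤ j by omega) with rfl | hj2
    · simpa [hP.1] using hγX
    · exact hP.le_pow_of_forall_lt hΔ hX hj2 hjN fun k hk hkj => ih k hkj hk (by omega)

theorem IsSweepEnum.le_mul_pow_mul_pow (hP : IsSweepEnum Δ γ P) (hΔ : 2 ≤ Δ) (hN : 0 < N) :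
    P N ≤ (3 * (γ + 1) * (N + 1) ^ N) ^ (2 * N) * Δ ^ (4 * N) * ((2 * (N + 1)) ^ (2 * N)) ^ Δ := by
  set X := 3 * (γ + 1) * ((N + 1) ^ N * Δ ^ 2 * (2 * (N + 1)) ^ Δ) with hXdef
  have hY : 0 < (N + 1) ^ N * Δ ^ 2 * (2 * (N + 1)) ^ Δ := by positivity
  have hγX : γ + 1 ≤ X :=
    calc γ + 1 ≤ 3 * (γ + 1) := by omega
      _ ≤ X := Nat.le_mul_of_pos_right _ hY
  have hX : 3 * ((N + 1) ^ N * Δ ^ 2 * (2 * (N + 1)) ^ Δ) ≤ X :=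
    calc 3 * ((N + 1) ^ N * Δ ^ 2 * (2 * (N + 1)) ^ Δ)
        ≤ 3 * ((N + 1) ^ N * Δ ^ 2 * (2 * (N + 1)) ^ Δ) * (γ + 1) :=
          Nat.le_mul_of_pos_right _ (by omega)
      _ = X := by rw [hXdef]; ring
  calc P N ≤ X ^ (2 * N - 1) := hP.le_pow hΔ hγX hX N hN le_rfl
    _ ≤ X ^ (2 * N) := Nat.pow_le_pow_right (by omega) (by omega)
    _ = _ := by simp only [hXdef, mul_pow, ← pow_mul]; ring

end SweepBound

/-- For every fixed `n ≥ 1` and `γ ≥ 0` there are constants `c, C > 0` with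
`P_{Δ,γ}(n) ≤ C * Δ ^ c * c ^ Δ` for all `Δ ≥ 2`; i.e. `P_{Δ,γ}(n) = O(Δ^c · c^Δ)` as
`Δ → ∞` with `n` and `γ` held constant. -/
theorem sweepEnum_upper_bound_in_Delta (n γ : ℕ) (hn : 1 ≤ n) :
    ∃ c C : ℝ, 0 < c ∧ 0 < C ∧
      ∀ Δ : ℕ, 2 ≤ Δ → ∀ P : ℕ → ℕ, IsSweepEnum Δ γ P →
        (P n : ℝ) ≤ C * (Δ : ℝ) ^ c * c ^ Δ := by
  set A := (3 * (γ + 1) * (n + 1) ^ n) ^ (2 * n)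
  set B := (2 * (n + 1)) ^ (2 * n)
  refine ⟨((4 * n + B : ℕ) : ℝ), (A : ℝ), by positivity, by positivity, fun Δ hΔ P hP => ?_⟩
  have hΔ1 : (1 : ℝ) ≤ Δ := by exact_mod_cast (by omega : 1 ≤ Δ)
  calc (P n : ℝ) ≤ A * (Δ : ℝ) ^ (4 * n) * (B : ℝ) ^ Δ := by
        exact_mod_cast hP.le_mul_pow_mul_pow hΔ hn
    _ ≤ A * (Δ : ℝ) ^ ((4 * n + B : ℕ) : ℝ) * ((4 * n + B : ℕ) : ℝ) ^ Δ := by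
        gcongr
        · rw [← Real.rpow_natCast]
          exact Real.rpow_le_rpow_of_exponent_le hΔ1 (by exact_mod_cast Nat.le_add_right _ _)
        · exact_mod_cast Nat.le_add_left _ _
end

section
/- Fix Δ ≥ 2 and consider the infinite complete Δ-ary tree T_{Δ,0}. For each finite prefix-closed set A ⊆ List (Fin Δ) containing the empty list, define for a ∈ A the set B_a = { a ++ [i] : i : Fin Δ } \ A of children of a that are not in A, and define S_A = { B_a : a ∈ A, B_a ≠ ∅ }. Then: (i) S_A is a sweep-cover of T_{Δ,0} with |S_A| ≤ |A|; and (ii) the map A ↦ S_A is injective on the family of finite prefix-closed subsets containing the empty list. Hence every such set of internal nodes (equivalently, every Raney tree of type (1, Δ, k+1) with its degree-1 root removed) determines a distinct sweep-cover of T_{Δ,0}. -/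
/-- The edge relation of the infinite complete `Δ`-ary tree on `List (Fin Δ)`:
`w` is a child of `v` iff `w = v ++ [i]` for some `i : Fin Δ`. -/
def aryEdge (Δ : ℕ) (v w : List (Fin Δ)) : Prop :=
  ∃ i : Fin Δ, w = v ++ [i]

/-- For a set `A` of vertices and `a ∈ A`, the set `B_a` of children of `a` not in `A`. -/
def childBlock (Δ : ℕ) (A : Set (List (Fin Δ))) (a : List (Fin Δ)) : Set (List (Fin Δ)) :=
  {w | ∃ i : Fin Δ, w = a ++ [i]} \ A

/-- The collection `S_A = { B_a : a ∈ A, B_a ≠ ∅ }`. -/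
def sweepOfInternal (Δ : ℕ) (A : Set (List (Fin Δ))) : Set (Set (List (Fin Δ))) :=
  {B | ∃ a ∈ A, B = childBlock Δ A a ∧ B ≠ ∅}

/-!
The union of the blocks of `S_A` is the frontier of `A`: the vertices outside `A` whose parent
lies in `A`. Walking down from the root, every vertex outside `A` passes through the frontier,
and below every vertex of the finite set `A` some frontier vertex is reached, which gives the
covering property; prefix-closedness keeps the frontier an antichain. Conversely, `A` is
recovered from `S_A` as the set of vertices having no frontier vertex as an ancestor-or-self,
so `A ↦ S_A` is injective.
-/

section AryTree

variable {Δ : ℕ}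

theorem isPrefix_of_reflTransGen_aryEdge {u v : List (Fin Δ)}
    (h : Relation.ReflTransGen (aryEdge Δ) u v) : u <+: v := by
  induction h with
  | refl => exact List.prefix_refl u
  | tail _ hedge ih =>
    obtain ⟨i, rfl⟩ := hedge
    exact ih.trans (List.prefix_append _ _)

theorem isPrefix_of_transGen_aryEdge_append_singleton {u v : List (Fin Δ)} {i : Fin Δ}
    (h : Relation.TransGen (aryEdge Δ) u (v ++ [i])) : u <+: v := by
  obtain ⟨b, hub, j, hj⟩ := Relation.TransGen.tail'_iff.mp h
  obtain rfl : v = b := (List.append_inj' hj rfl).1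
  exact isPrefix_of_reflTransGen_aryEdge hub

theorem disjoint_childBlock {A : Set (List (Fin Δ))} {a a' : List (Fin Δ)} (h : a ≠ a') :
    Disjoint (childBlock Δ A a) (childBlock Δ A a') := by
  refine Set.disjoint_left.mpr ?_
  rintro _ ⟨⟨i, rfl⟩, -⟩ ⟨⟨j, hj⟩, -⟩
  exact h (List.append_inj' hj rfl).1

theorem childBlock_finite (A : Set (List (Fin Δ))) (a : List (Fin Δ)) :
    (childBlock Δ A a).Finite :=
  (Set.finite_range fun i : Fin Δ => a ++ [i]).subset fun _ ⟨⟨i, hi⟩, _⟩ => ⟨i, hi.symm⟩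

theorem sweepOfInternal_subset_image (A : Set (List (Fin Δ))) :
    sweepOfInternal Δ A ⊆ childBlock Δ A '' A := by
  rintro _ ⟨a, ha, rfl, -⟩
  exact ⟨a, ha, rfl⟩

theorem ncard_sweepOfInternal_le {A : Set (List (Fin Δ))} (hA : A.Finite) :
    (sweepOfInternal Δ A).ncard ≤ A.ncard :=
  (Set.ncard_le_ncard (sweepOfInternal_subset_image A) (hA.image _)).trans
    (Set.ncard_image_le hA)

theorem mem_sUnion_sweepOfInternal {A : Set (List (Fin Δ))} {w : List (Fin Δ)} :
    w ∈ ⋃₀ sweepOfInternal Δ A ↔ ∃ a ∈ A, w ∈ childBlock Δ A a := by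
  constructor
  · rintro ⟨_, ⟨a, ha, rfl, -⟩, hw⟩
    exact ⟨a, ha, hw⟩
  · rintro ⟨a, ha, hw⟩
    exact ⟨childBlock Δ A a, ⟨a, ha, rfl, Set.nonempty_iff_ne_empty.mp ⟨w, hw⟩⟩, hw⟩

theorem exists_mem_sUnion_sweepOfInternal_reflTransGen {A : Set (List (Fin Δ))}
    (hroot : [] ∈ A) {v : List (Fin Δ)} (hv : v ∉ A) :
    ∃ w ∈ ⋃₀ sweepOfInternal Δ A, Relation.ReflTransGen (aryEdge Δ) w v := by
  induction v using List.reverseRecOn with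
  | nil => exact absurd hroot hv
  | append_singleton v i ih =>
    by_cases hvA : v ∈ A
    · exact ⟨v ++ [i], mem_sUnion_sweepOfInternal.mpr ⟨v, hvA, ⟨i, rfl⟩, hv⟩, .refl⟩
    · obtain ⟨w, hw, hwv⟩ := ih hvA
      exact ⟨w, hw, hwv.tail ⟨i, rfl⟩⟩

theorem exists_mem_sUnion_sweepOfInternal_transGen [NeZero Δ] {A : Set (List (Fin Δ))}
    (hA : A.Finite) {v : List (Fin Δ)} (hv : v ∈ A) :
    ∃ w ∈ ⋃₀ sweepOfInternal Δ A, Relation.TransGen (aryEdge Δ) v w := by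
  obtain ⟨a, ⟨haA, hva⟩, hmax⟩ :=
    (hA.subset fun _ h => h.1 : {a ∈ A | Relation.ReflTransGen (aryEdge Δ) v a}.Finite)
      |>.exists_maximalFor List.length _ ⟨v, hv, .refl⟩
  have hchild : a ++ [0] ∉ A := fun hmem => by
    have := hmax ⟨hmem, hva.tail ⟨0, rfl⟩⟩ (by simp)
    simp at this
  exact ⟨a ++ [0], mem_sUnion_sweepOfInternal.mpr ⟨a, haA, ⟨0, rfl⟩, hchild⟩,
    Relation.TransGen.tail' hva ⟨0, rfl⟩⟩

theorem mem_iff_forall_mem_sUnion_sweepOfInternal {A : Set (List (Fin Δ))} (hroot : [] ∈ A)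
    (hpc : ∀ a ∈ A, ∀ b : List (Fin Δ), b <+: a → b ∈ A) (v : List (Fin Δ)) :
    v ∈ A ↔ ∀ w ∈ ⋃₀ sweepOfInternal Δ A, ¬ Relation.ReflTransGen (aryEdge Δ) w v := by
  refine ⟨fun hv w hw hwv => ?_, fun h => ?_⟩
  · obtain ⟨a, -, hwa⟩ := mem_sUnion_sweepOfInternal.mp hw
    exact hwa.2 (hpc v hv w (isPrefix_of_reflTransGen_aryEdge hwv))
  · by_contra hv
    obtain ⟨w, hw, hwv⟩ := exists_mem_sUnion_sweepOfInternal_reflTransGen hroot hv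
    exact h w hw hwv

theorem isSweepCover_sweepOfInternal [NeZero Δ] {A : Set (List (Fin Δ))} (hA : A.Finite)
    (hroot : [] ∈ A) (hpc : ∀ a ∈ A, ∀ b : List (Fin Δ), b <+: a → b ∈ A) :
    IsSweepCover (aryEdge Δ) [] (sweepOfInternal Δ A) where
  finite := (hA.image _).subset (sweepOfInternal_subset_image A)
  mem_finite := by
    rintro _ ⟨a, -, rfl, -⟩
    exact childBlock_finite A a
  mem_nonempty := by
    rintro _ ⟨a, -, rfl, hne⟩
    exact Set.nonempty_iff_ne_empty.mpr hne
  pairwiseDisjoint := by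
    rintro _ ⟨a, -, rfl, -⟩ _ ⟨a', -, rfl, -⟩ hne
    exact disjoint_childBlock fun h => hne (h ▸ rfl)
  siblings := by
    rintro _ ⟨a, -, rfl, -⟩
    exact Or.inr ⟨a, fun _ ⟨⟨i, hi⟩, _⟩ => ⟨i, hi⟩⟩
  covers v := by
    by_cases hv : v ∈ A
    · exact Or.inr (Or.inl (exists_mem_sUnion_sweepOfInternal_transGen hA hv))
    · obtain ⟨w, hw, hwv⟩ := exists_mem_sUnion_sweepOfInternal_reflTransGen hroot hv
      rcases Relation.reflTransGen_iff_eq_or_transGen.mp hwv with rfl | hwv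
      · exact Or.inl hw
      · exact Or.inr (Or.inr ⟨w, hw, hwv⟩)
  antichain u hu v hv _ huv := by
    obtain ⟨a, ha, ⟨i, rfl⟩, -⟩ := mem_sUnion_sweepOfInternal.mp hv
    obtain ⟨-, -, -, huA⟩ := mem_sUnion_sweepOfInternal.mp hu
    exact huA (hpc a ha u (isPrefix_of_transGen_aryEdge_append_singleton huv))

theorem eq_of_sweepOfInternal_eq {A A' : Set (List (Fin Δ))}
    (hroot : [] ∈ A) (hpc : ∀ a ∈ A, ∀ b : List (Fin Δ), b <+: a → b ∈ A)
    (hroot' : [] ∈ A') (hpc' : ∀ a ∈ A', ∀ b : List (Fin Δ), b <+: a → b ∈ A')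
    (h : sweepOfInternal Δ A = sweepOfInternal Δ A') : A = A' := by
  ext v
  rw [mem_iff_forall_mem_sUnion_sweepOfInternal hroot hpc,
    mem_iff_forall_mem_sUnion_sweepOfInternal hroot' hpc', h]

end AryTree

/-- In the infinite complete `Δ`-ary tree `T_{Δ,0}`, every finite
prefix-closed set `A` of vertices containing the root `[]` determines a sweep-cover
`S_A = { B_a : a ∈ A, B_a ≠ ∅ }` with `|S_A| ≤ |A|`, and the assignment `A ↦ S_A` is
injective on finite prefix-closed sets containing `[]`. -/
theorem prefixClosed_sets_give_distinct_sweepCovers (Δ : ℕ) (hΔ : 2 ≤ Δ) :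
    (∀ A : Set (List (Fin Δ)), A.Finite → ([] : List (Fin Δ)) ∈ A →
        (∀ a ∈ A, ∀ b : List (Fin Δ), b <+: a → b ∈ A) →
        IsSweepCover (aryEdge Δ) ([] : List (Fin Δ)) (sweepOfInternal Δ A) ∧
        (sweepOfInternal Δ A).ncard ≤ A.ncard) ∧
    (∀ A A' : Set (List (Fin Δ)),
        A.Finite → ([] : List (Fin Δ)) ∈ A →
        (∀ a ∈ A, ∀ b : List (Fin Δ), b <+: a → b ∈ A) →
        A'.Finite → ([] : List (Fin Δ)) ∈ A' →
        (∀ a ∈ A', ∀ b : List (Fin Δ), b <+: a → b ∈ A') →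
        sweepOfInternal Δ A = sweepOfInternal Δ A' → A = A') := by
  have : NeZero Δ := ⟨by omega⟩
  exact ⟨fun A hA hroot hpc =>
      ⟨isSweepCover_sweepOfInternal hA hroot hpc, ncard_sweepOfInternal_le hA⟩,
    fun A A' _ hroot hpc _ hroot' hpc' h => eq_of_sweepOfInternal_eq hroot hpc hroot' hpc' h⟩
end
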